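/- arXiv:1512.07044 — 7 statements merged into one kernel-verified Lean document; each statement's English description precedes it below -/
import Mathlib

section
/- Kaloujnine–Krasner embedding theorem: Let G and H be groups and let 1 → H → E →τ→ G → 1 be an extension of H by G (i.e. H is a normal subgroup of E and τ : E → G is a surjective group homomorphism with kernel H). Then there exists an injective group homomorphism ι : E → H ≀≀ G into the unrestricted regular wreath product such that π ∘ ι = τ, where π : H ≀≀ G → G is the canonical projection, and such that for every h ∈ H the function component of ι(h) takes the value h at 1 ∈ G (in particular ι maps H into ker π). -/
/-- Multiplication in the unrestricted regular wreath product `H ≀≀ G = (G → H) ⋊ G`,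
where `G` acts on functions `G → H` by `(ᵍf)(x) = f(xg)`:
`(f, g)·(f', g') = (f · ᵍf', g·g')`. -/
def wreathMul {H G : Type*} [Group H] [Group G] (a b : (G → H) × G) : (G → H) × G :=
  (fun x => a.1 x * b.1 (x * a.2), a.2 * b.2)

/-!
Fix a section `s` of `τ` with `s 1 = 1`. Every `e : E` is sent to the pair `(f_e, τ e)` with
`f_e x = s x * e * (s (x * τ e))⁻¹`, which lies in `ker τ` because `τ ∘ s = id`. The product
`f_{e₁ e₂} x` telescopes as `f_{e₁} x * f_{e₂} (x * τ e₁)`, which is the wreath multiplication;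
`f_e 1 = e * (s (τ e))⁻¹` together with `τ e` recovers `e`, giving injectivity; and for `h ∈ ker τ`
one gets `f_h 1 = h`.
-/

namespace KaloujnineKrasner

variable {E G : Type*} [Group E] [Group G] {τ : E →* G}

theorem exists_section_map_one (hτ : Function.Surjective τ) :
    ∃ s : G → E, (∀ g, τ (s g) = g) ∧ s 1 = 1 := by
  choose s₀ hs₀ using hτ
  exact ⟨fun g => s₀ g * (s₀ 1)⁻¹, fun g => by simp [hs₀], mul_inv_cancel _⟩

variable {s : G → E}

theorem section_mul_mul_inv_mem_ker (hs : ∀ g, τ (s g) = g) (e : E) (x : G) :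
    s x * e * (s (x * τ e))⁻¹ ∈ τ.ker := by
  rw [MonoidHom.mem_ker, map_mul, map_mul, map_inv, hs, hs]
  group

variable (hs : ∀ g, τ (s g) = g)

def embedding (e : E) : (G → τ.ker) × G :=
  (fun x => ⟨s x * e * (s (x * τ e))⁻¹, section_mul_mul_inv_mem_ker hs e x⟩, τ e)

theorem coe_embedding_fst_apply (e : E) (x : G) :
    ((embedding hs e).1 x : E) = s x * e * (s (x * τ e))⁻¹ :=
  rfl

theorem embedding_snd (e : E) : (embedding hs e).2 = τ e :=
  rfl

theorem embedding_mul (e₁ e₂ : E) :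
    embedding hs (e₁ * e₂) = wreathMul (embedding hs e₁) (embedding hs e₂) := by
  refine Prod.ext (funext fun x => Subtype.ext ?_) (map_mul τ e₁ e₂)
  simp only [wreathMul, embedding, Subgroup.coe_mul, map_mul]
  group

theorem embedding_injective : Function.Injective (embedding hs) := by
  intro e₁ e₂ h
  have hτe : τ e₁ = τ e₂ := congrArg Prod.snd h
  have hfst : s 1 * e₁ * (s (1 * τ e₁))⁻¹ = s 1 * e₂ * (s (1 * τ e₂))⁻¹ :=
    congrArg (fun p => (p.1 1 : E)) h
  rw [hτe] at hfst
  exact mul_left_cancel (mul_right_cancel hfst)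

theorem coe_embedding_fst_one_of_mem_ker (hs₁ : s 1 = 1) (h : τ.ker) :
    ((embedding hs h).1 1 : E) = h := by
  simp [coe_embedding_fst_apply, hs₁, MonoidHom.mem_ker.mp h.2]

end KaloujnineKrasner

/-- **Kaloujnine–Krasner embedding theorem**: given an extension
`1 → H → E →τ→ G → 1` (with `H = ker τ`), there is an injective homomorphism
`ι : E → H ≀≀ G` into the unrestricted regular wreath product such that `π ∘ ι = τ`
and such that for every `h ∈ H` the function component of `ι h` takes the value `h`
at `1 ∈ G`. -/
theorem kaloujnine_krasner {E G : Type*} [Group E] [Group G]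
    (τ : E →* G) (hτ : Function.Surjective τ) :
    ∃ ι : E → (G → ↥τ.ker) × G,
      Function.Injective ι ∧
      (∀ e₁ e₂ : E, ι (e₁ * e₂) = wreathMul (ι e₁) (ι e₂)) ∧
      (∀ e : E, (ι e).2 = τ e) ∧
      (∀ h : ↥τ.ker, (((ι h).1 1 : ↥τ.ker) : E) = (h : E)) := by
  obtain ⟨s, hs, hs₁⟩ := KaloujnineKrasner.exists_section_map_one hτ
  exact ⟨KaloujnineKrasner.embedding hs, KaloujnineKrasner.embedding_injective hs,
    KaloujnineKrasner.embedding_mul hs, KaloujnineKrasner.embedding_snd hs,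
    KaloujnineKrasner.coe_embedding_fst_one_of_mem_ker hs hs₁⟩
end

section
/- Permutational Kaloujnine–Krasner theorem (extension of homomorphisms): Let H ≤ E be groups, let K be a group, and let f₀ : H → K be a group homomorphism. Let E act on the right on the coset space H\E of right cosets by (Hg)·e = H(ge). Then there exists a group homomorphism f : E → K ≀≀_{H\E} E into the unrestricted permutational wreath product such that π ∘ f = id_E, where π : K ≀≀_{H\E} E → E is the canonical projection, and such that for every h ∈ H the function component of f(h) takes the value f₀(h) at the coset H ∈ H\E. -/
/-!
Choose a right transversal `T` of `H` with `1 ∈ T`, and write `t_x ∈ T` for the representative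
of the coset `x`. Since `t_x e` and `t_{x·e}` lie in the same right coset, `t_x e t_{x·e}⁻¹ ∈ H`,
and this `H`-valued function of `(x, e)` satisfies the cocycle identity for the right action of
`E` on `H\E` (the middle factors `t_{x·e₁}` cancel). Composing it with `f₀` and pairing with `e`
therefore gives a homomorphism into `K ≀≀_{H\E} E` splitting `π`; at `x = H` and `e = h ∈ H`
the cocycle is `1 · h · 1⁻¹ = h`.
-/

/-- The natural right action of `E` on the set `H\E` of right cosets of a subgroup
`H ≤ E`: `(Hg)·e = H(ge)`. -/
def rightCosetAct {E : Type*} [Group E] (H : Subgroup E)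
    (x : Quotient (QuotientGroup.rightRel H)) (e : E) :
    Quotient (QuotientGroup.rightRel H) :=
  Quotient.map' (fun g => g * e)
    (fun a b hab => by
      rw [QuotientGroup.rightRel_apply] at hab ⊢
      simpa [mul_assoc] using hab) x

/-- Multiplication in the unrestricted permutational wreath product
`K ≀≀_X E = (X → K) ⋊ E`, with respect to a right action `act : X → E → X`:
`(c, e)·(c', e') = (x ↦ c x * c' (x·e), e·e')`. -/
def permWreathMul {K E X : Type*} [Group K] [Group E] (act : X → E → X)
    (a b : (X → K) × E) : (X → K) × E :=
  (fun x => a.1 x * b.1 (act x a.2), a.2 * b.2)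

section RightCosetAction

variable {E : Type*} [Group E] (H : Subgroup E)

theorem rightCosetAct_mk (g e : E) :
    rightCosetAct H (Quotient.mk'' g) e = Quotient.mk'' (g * e) :=
  rfl

theorem rightCosetAct_mul (x : Quotient (QuotientGroup.rightRel H)) (e₁ e₂ : E) :
    rightCosetAct H x (e₁ * e₂) = rightCosetAct H (rightCosetAct H x e₁) e₂ := by
  induction x using Quotient.inductionOn' with
  | h g => simp only [rightCosetAct_mk, mul_assoc]

variable {H} in
theorem rightCosetAct_mk_one_of_mem {h : E} (hh : h ∈ H) :
    rightCosetAct H (Quotient.mk'' 1) h = Quotient.mk'' 1 := by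
  rw [rightCosetAct_mk, one_mul, Quotient.eq'', QuotientGroup.rightRel_apply]
  simpa using hh

end RightCosetAction

noncomputable section

namespace Subgroup.IsComplement

variable {E K : Type*} [Group E] [Group K] {H : Subgroup E} {T : Set E} (hT : IsComplement H T)

theorem rightQuotientEquiv_mk_of_mem {t : E} (ht : t ∈ T) :
    (hT.rightQuotientEquiv (Quotient.mk'' t) : E) = t :=
  congrArg Subtype.val ((Equiv.ofBijective _ _).symm_apply_apply (⟨t, ht⟩ : T))

theorem rightQuotientEquiv_mul_mem (x : Quotient (QuotientGroup.rightRel H)) (e : E) :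
    (hT.rightQuotientEquiv x : E) * e * (hT.rightQuotientEquiv (rightCosetAct H x e) : E)⁻¹
      ∈ H := by
  have hrep : (Quotient.mk'' (hT.rightQuotientEquiv (rightCosetAct H x e) : E) :
      Quotient (QuotientGroup.rightRel H)) = Quotient.mk'' ((hT.rightQuotientEquiv x : E) * e) := by
    rw [mk''_rightQuotientEquiv, ← rightCosetAct_mk, mk''_rightQuotientEquiv]
  rwa [Quotient.eq'', QuotientGroup.rightRel_apply] at hrep

def cocycle (x : Quotient (QuotientGroup.rightRel H)) (e : E) : H :=
  ⟨(hT.rightQuotientEquiv x : E) * e * (hT.rightQuotientEquiv (rightCosetAct H x e) : E)⁻¹,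
    hT.rightQuotientEquiv_mul_mem x e⟩

theorem cocycle_mul (x : Quotient (QuotientGroup.rightRel H)) (e₁ e₂ : E) :
    hT.cocycle x (e₁ * e₂) = hT.cocycle x e₁ * hT.cocycle (rightCosetAct H x e₁) e₂ := by
  ext
  simp only [cocycle, Subgroup.coe_mul, rightCosetAct_mul, mul_assoc, inv_mul_cancel_left]

theorem cocycle_mk_one_of_mem (h1 : (1 : E) ∈ T) (h : H) :
    hT.cocycle (Quotient.mk'' 1) h = h := by
  ext
  simp only [cocycle, rightCosetAct_mk_one_of_mem h.2, hT.rightQuotientEquiv_mk_of_mem h1, one_mul,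
    inv_one, mul_one]

def kaloujnineKrasner (f₀ : H →* K) (e : E) : (Quotient (QuotientGroup.rightRel H) → K) × E :=
  (fun x => f₀ (hT.cocycle x e), e)

theorem kaloujnineKrasner_mul (f₀ : H →* K) (e₁ e₂ : E) :
    hT.kaloujnineKrasner f₀ (e₁ * e₂) =
      permWreathMul (rightCosetAct H) (hT.kaloujnineKrasner f₀ e₁) (hT.kaloujnineKrasner f₀ e₂) := by
  simp only [kaloujnineKrasner, permWreathMul, cocycle_mul, map_mul]

theorem kaloujnineKrasner_fst_mk_one (h1 : (1 : E) ∈ T) (f₀ : H →* K) (h : H) :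
    (hT.kaloujnineKrasner f₀ h).1 (Quotient.mk'' 1) = f₀ h :=
  congrArg f₀ (hT.cocycle_mk_one_of_mem h1 h)

end Subgroup.IsComplement

end

/-- **Permutational Kaloujnine–Krasner theorem**: given groups `H ≤ E`, a group `K` and a
homomorphism `f₀ : H → K`, there is a homomorphism `f : E → K ≀≀_{H\E} E` into the
unrestricted permutational wreath product over the right coset space `H\E`
(with its right `E`-action) such that `π ∘ f = id_E`, and such that for every `h ∈ H`
the function component of `f h` takes the value `f₀ h` at the coset `H = H·1`. -/
theorem permutational_kaloujnine_krasner {E K : Type*} [Group E] [Group K]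
    (H : Subgroup E) (f₀ : ↥H →* K) :
    ∃ f : E → (Quotient (QuotientGroup.rightRel H) → K) × E,
      (∀ e₁ e₂ : E, f (e₁ * e₂) = permWreathMul (rightCosetAct H) (f e₁) (f e₂)) ∧
      (∀ e : E, (f e).2 = e) ∧
      (∀ h : ↥H, (f (h : E)).1 (Quotient.mk'' (1 : E)) = f₀ h) := by
  obtain ⟨T, hT, h1⟩ := H.exists_isComplement_right 1
  exact ⟨hT.kaloujnineKrasner f₀, hT.kaloujnineKrasner_mul f₀, fun _ => rfl,
    hT.kaloujnineKrasner_fst_mk_one h1 f₀⟩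
end

section
/- Complete growth series of a direct product: Let G and H be groups with finite symmetric generating sets S and T respectively, and equip G × H with the finite symmetric generating set S' = (S × {1}) ∪ ({1} × T). Then CG_{G×H,S'}(z) = ι_G(CG_{G,S}(z)) · ι_H(CG_{H,T}(z)) in the power series ring (ℤ[G×H])[[z]], where ι_G and ι_H denote the maps on power series induced coefficientwise by the ring homomorphisms ℤ[G] → ℤ[G×H] and ℤ[H] → ℤ[G×H] coming from the inclusions g ↦ (g,1) and h ↦ (1,h). -/
/-!
A shortest word for `(g, h)` over `(S × {1}) ∪ ({1} × T)` splits into its letters from `S`,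
spelling `g`, and its letters from `T`, spelling `h`; hence `‖(g, h)‖ = ‖g‖_S + ‖h‖_T`. The
sphere of radius `n` in `G × H` is therefore the disjoint union, over `i + j = n`, of the products
of the spheres of radii `i` in `G` and `j` in `H`, which is the coefficient of `z ^ n` in the
product of the two series.
-/

/-- The word norm of `g` with respect to a generating set `S`. -/
noncomputable def wordNorm {G : Type*} [Group G] (S : Set G) (g : G) : ℕ :=
  sInf {n | ∃ l : List G, (∀ s ∈ l, s ∈ S) ∧ l.length = n ∧ l.prod = g}

/-- The complete growth series `CG_{G,S}(z) ∈ (ℤ[G])[[z]]`: the coefficient of `z^n`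
is the sum `Σ_{‖g‖_S = n} g` in the group ring `ℤ[G]`. -/
noncomputable def completeGrowthSeries {G : Type*} [Group G] (S : Set G) :
    PowerSeries (MonoidAlgebra ℤ G) :=
  PowerSeries.mk fun n => ∑ᶠ g ∈ {g : G | wordNorm S g = n}, MonoidAlgebra.of ℤ G g

lemma Submonoid.closure_eq_top_of_inv_eq {G : Type*} [Group G] {S : Set G} (hinv : S⁻¹ = S)
    (hgen : Subgroup.closure S = ⊤) : Submonoid.closure S = ⊤ := by
  rw [← Set.union_self S, ← congrArg (S ∪ ·) hinv, ← Subgroup.closure_toSubmonoid, hgen,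
    Subgroup.top_toSubmonoid]

lemma Submonoid.closure_inl_image_union_inr_image {M N : Type*} [Monoid M] [Monoid N]
    {S : Set M} {T : Set N} (hS : Submonoid.closure S = ⊤) (hT : Submonoid.closure T = ⊤) :
    Submonoid.closure (MonoidHom.inl M N '' S ∪ MonoidHom.inr M N '' T) = ⊤ := by
  rw [Submonoid.closure_union, ← MonoidHom.map_mclosure, ← MonoidHom.map_mclosure, hS, hT,
    ← MonoidHom.mrange_eq_map, ← MonoidHom.mrange_eq_map, mrange_inl_sup_mrange_inr]

section WordNorm

variable {G : Type*} [Group G] {S : Set G}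

lemma wordNorm_le_length {l : List G} (hl : ∀ s ∈ l, s ∈ S) :
    wordNorm S l.prod ≤ l.length :=
  Nat.sInf_le ⟨l, hl, rfl, rfl⟩

lemma exists_length_eq_wordNorm (hS : Submonoid.closure S = ⊤) (g : G) :
    ∃ l : List G, (∀ s ∈ l, s ∈ S) ∧ l.length = wordNorm S g ∧ l.prod = g := by
  obtain ⟨l, hl, rfl⟩ := Submonoid.exists_list_of_mem_closure (hS.symm ▸ Submonoid.mem_top g)
  exact Nat.sInf_mem
    (s := {n | ∃ l' : List G, (∀ s ∈ l', s ∈ S) ∧ l'.length = n ∧ l'.prod = l.prod})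
    ⟨_, l, hl, rfl, rfl⟩

lemma wordNorm_one : wordNorm S 1 = 0 :=
  Nat.le_zero.mp (wordNorm_le_length (l := []) (by simp))

lemma wordNorm_mul_le (hS : Submonoid.closure S = ⊤) {s : G} (hs : s ∈ S) (g : G) :
    wordNorm S (s * g) ≤ wordNorm S g + 1 := by
  obtain ⟨l, hl, hlen, rfl⟩ := exists_length_eq_wordNorm hS g
  simpa [hlen] using wordNorm_le_length (S := S) (l := s :: l) (by simpa using ⟨hs, hl⟩)

lemma finite_setOf_wordNorm_eq (hfin : S.Finite) (hS : Submonoid.closure S = ⊤) (n : ℕ) :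
    {g : G | wordNorm S g = n}.Finite := by
  have : Finite S := hfin
  refine ((List.finite_length_eq S n).image fun l => (l.map Subtype.val).prod).subset ?_
  intro g hg
  obtain ⟨l, hl, hlen, rfl⟩ := exists_length_eq_wordNorm hS g
  refine ⟨l.attach.map fun s => ⟨s.1, hl s.1 s.2⟩, by simpa [hlen] using hg, ?_⟩
  simp [Function.comp_def]

end WordNorm

section Prod

variable {G H : Type*} [Group G] [Group H] {S : Set G} {T : Set H}

lemma wordNorm_fst_add_wordNorm_snd_le_length (hS : Submonoid.closure S = ⊤)
    (hT : Submonoid.closure T = ⊤) {l : List (G × H)}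
    (hl : ∀ x ∈ l, x ∈ MonoidHom.inl G H '' S ∪ MonoidHom.inr G H '' T) :
    wordNorm S l.prod.1 + wordNorm T l.prod.2 ≤ l.length := by
  induction l with
  | nil => simp [wordNorm_one]
  | cons x l ih =>
    obtain ⟨hx, hl⟩ := List.forall_mem_cons.mp hl
    have := ih hl
    rcases hx with ⟨s, hs, rfl⟩ | ⟨t, ht, rfl⟩
    · have := wordNorm_mul_le hS hs l.prod.1
      simp only [List.prod_cons, Prod.fst_mul, Prod.snd_mul, MonoidHom.inl_apply, one_mul,
        List.length_cons]
      omega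
    · have := wordNorm_mul_le hT ht l.prod.2
      simp only [List.prod_cons, Prod.fst_mul, Prod.snd_mul, MonoidHom.inr_apply, one_mul,
        List.length_cons]
      omega

lemma wordNorm_inl_image_union_inr_image (hS : Submonoid.closure S = ⊤)
    (hT : Submonoid.closure T = ⊤) (p : G × H) :
    wordNorm (MonoidHom.inl G H '' S ∪ MonoidHom.inr G H '' T) p
      = wordNorm S p.1 + wordNorm T p.2 := by
  refine le_antisymm ?_ ?_
  · obtain ⟨l₁, hl₁, hlen₁, hp₁⟩ := exists_length_eq_wordNorm hS p.1
    obtain ⟨l₂, hl₂, hlen₂, hp₂⟩ := exists_length_eq_wordNorm hT p.2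
    have hp : (l₁.map (MonoidHom.inl G H) ++ l₂.map (MonoidHom.inr G H)).prod = p := by
      simp [← map_list_prod, hp₁, hp₂]
    have hl : ∀ x ∈ l₁.map (MonoidHom.inl G H) ++ l₂.map (MonoidHom.inr G H),
        x ∈ MonoidHom.inl G H '' S ∪ MonoidHom.inr G H '' T := by
      simp only [List.mem_append, List.mem_map]
      rintro _ (⟨s, hs, rfl⟩ | ⟨t, ht, rfl⟩)
      exacts [.inl ⟨s, hl₁ s hs, rfl⟩, .inr ⟨t, hl₂ t ht, rfl⟩]
    simpa [hp, hlen₁, hlen₂] using wordNorm_le_length hl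
  · obtain ⟨l, hl, hlen, rfl⟩ :=
      exists_length_eq_wordNorm (Submonoid.closure_inl_image_union_inr_image hS hT) p
    exact hlen ▸ wordNorm_fst_add_wordNorm_snd_le_length hS hT hl

end Prod

namespace MonoidAlgebra

variable {R M N : Type*} [Semiring R] [Monoid M] [Monoid N]

lemma mapDomainRingHom_sum_of (f : M →* N) (s : Finset M) :
    mapDomainRingHom R f (∑ g ∈ s, of R M g) = ∑ g ∈ s, of R N (f g) := by
  simp [of_apply]

lemma sum_of_inl_mul_sum_of_inr (A : Finset M) (B : Finset N) :
    (∑ g ∈ A, of R (M × N) (MonoidHom.inl M N g)) *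
        ∑ h ∈ B, of R (M × N) (MonoidHom.inr M N h) = ∑ p ∈ A ×ˢ B, of R (M × N) p := by
  simp [Finset.sum_mul_sum, Finset.sum_product]

end MonoidAlgebra

lemma coeff_completeGrowthSeries {G : Type*} [Group G] {S : Set G} {n : ℕ}
    (hfin : {g : G | wordNorm S g = n}.Finite) :
    PowerSeries.coeff n (completeGrowthSeries S) =
      ∑ g ∈ hfin.toFinset, MonoidAlgebra.of ℤ G g := by
  rw [completeGrowthSeries, PowerSeries.coeff_mk, finsum_mem_eq_finite_toFinset_sum]

/-- **Complete growth series of a direct product**: for groups `G`, `H` with finite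
symmetric generating sets `S`, `T`, and `G × H` with the generating set
`(S × {1}) ∪ ({1} × T)`, one has `CG_{G×H}(z) = ι_G(CG_G(z)) · ι_H(CG_H(z))`,
where `ι_G`, `ι_H` are induced by the inclusions `G → G × H`, `H → G × H`. -/
theorem completeGrowthSeries_prod {G H : Type*} [Group G] [Group H]
    (S : Set G) (T : Set H)
    (hSfin : S.Finite) (hTfin : T.Finite)
    (hSsym : S⁻¹ = S) (hTsym : T⁻¹ = T)
    (hSgen : Subgroup.closure S = ⊤) (hTgen : Subgroup.closure T = ⊤) :
    completeGrowthSeries ((MonoidHom.inl G H) '' S ∪ (MonoidHom.inr G H) '' T) =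
      PowerSeries.map (MonoidAlgebra.mapDomainRingHom ℤ (MonoidHom.inl G H))
          (completeGrowthSeries S) *
      PowerSeries.map (MonoidAlgebra.mapDomainRingHom ℤ (MonoidHom.inr G H))
          (completeGrowthSeries T) := by
  classical
  have hS := Submonoid.closure_eq_top_of_inv_eq hSsym hSgen
  have hT := Submonoid.closure_eq_top_of_inv_eq hTsym hTgen
  have hST := Submonoid.closure_inl_image_union_inr_image hS hT
  have hA := finite_setOf_wordNorm_eq hSfin hS
  have hB := finite_setOf_wordNorm_eq hTfin hT
  have hU := finite_setOf_wordNorm_eq ((hSfin.image _).union (hTfin.image _)) hST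
  refine PowerSeries.ext fun n => ?_
  rw [PowerSeries.coeff_mul, coeff_completeGrowthSeries (hU n)]
  simp only [PowerSeries.coeff_map, coeff_completeGrowthSeries (hA _),
    coeff_completeGrowthSeries (hB _), MonoidAlgebra.mapDomainRingHom_sum_of,
    MonoidAlgebra.sum_of_inl_mul_sum_of_inr]
  have hnorm := wordNorm_inl_image_union_inr_image hS hT
  -- sort the sphere of radius `n` in `G × H` by the radii of the two coordinates
  refine (Finset.sum_fiberwise_of_maps_to (g := fun p => (wordNorm S p.1, wordNorm T p.2))
    ?_ _).symm.trans (Finset.sum_congr rfl fun ij hij => Finset.sum_congr ?_ fun _ _ => rfl)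
  · simp [hnorm]
  · ext p
    rw [Finset.HasAntidiagonal.mem_antidiagonal] at hij
    simp only [Finset.mem_filter, Set.Finite.mem_toFinset, Set.mem_ofPred_eq, Finset.mem_product,
      hnorm, Prod.ext_iff]
    omega
end

section
/- Concave sublinear majorant: Let f : ℕ → ℝ≥0 be a function with f(n)/n → 0 as n → ∞. Then there exists a concave function g : ℝ≥0 → ℝ≥0 such that f(n) ≤ g(n) for all n ∈ ℕ and g(x)/x → 0 as x → ∞. -/
/-- **Concave sublinear majorant**: every sublinear function `f : ℕ → ℝ≥0`
(`f n / n → 0`) is bounded above by a concave sublinear function `g : ℝ≥0 → ℝ≥0`. -/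
theorem exists_concave_sublinear_majorant (f : ℕ → NNReal)
    (hf : Filter.Tendsto (fun n : ℕ => f n / (n : NNReal)) Filter.atTop (nhds 0)) :
    ∃ g : NNReal → NNReal, ConcaveOn NNReal Set.univ g ∧ (∀ n : ℕ, f n ≤ g n) ∧
      Filter.Tendsto (fun x : NNReal => g x / x) Filter.atTop (nhds 0) := by
  -- slopes
  set ε : ℕ → NNReal := fun k => ((k : NNReal) + 1)⁻¹ with hε
  have hεpos : ∀ k, 0 < ε k := by
    intro k
    simp [hε]
  -- intercepts
  have key : ∀ k : ℕ, ∃ a : NNReal, ∀ n : ℕ, f n ≤ a + ε k * n := by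
    intro k
    obtain ⟨N, hN⟩ := Filter.eventually_atTop.1 ((tendsto_order.1 hf).2 (ε k) (hεpos k))
    refine ⟨(Finset.range (N + 1)).sup f, fun n => ?_⟩
    rcases le_or_gt n N with h | h
    · exact le_add_right (Finset.le_sup (Finset.mem_range.2 (Nat.lt_succ_of_le h)))
    · have hn0 : (0 : NNReal) < n := by
        exact_mod_cast lt_of_le_of_lt (Nat.zero_le N) h
      have := hN n h.le
      have : f n < ε k * n := by
        rwa [div_lt_iff₀ hn0] at this
      exact le_add_left this.le
  choose a ha using key
  refine ⟨fun x => ⨅ k, a k + ε k * x, ?_, ?_, ?_⟩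
  · -- concavity
    refine ⟨convex_univ, ?_⟩
    intro x _ y _ p q hp hq hpq
    refine le_ciInf fun k => ?_
    have hx : (⨅ j, a j + ε j * x) ≤ a k + ε k * x := ciInf_le (OrderBot.bddBelow _) k
    have hy : (⨅ j, a j + ε j * y) ≤ a k + ε k * y := ciInf_le (OrderBot.bddBelow _) k
    calc p • (⨅ j, a j + ε j * x) + q • (⨅ j, a j + ε j * y)
        ≤ p * (a k + ε k * x) + q * (a k + ε k * y) := by
          exact add_le_add (mul_le_mul_right hx p) (mul_le_mul_right hy q)
      _ = a k + ε k * (p • x + q • y) := by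
          simp only [smul_eq_mul]
          have : p * (a k + ε k * x) + q * (a k + ε k * y)
              = (p + q) * a k + ε k * (p * x + q * y) := by ring
          rw [this, hpq, one_mul]
  · -- majorant
    intro n
    exact le_ciInf fun k => ha k n
  · -- sublinear
    refine tendsto_order.2 ⟨fun b hb => absurd hb (not_lt.2 b.2), fun b hb => ?_⟩
    have hb2 : 0 < b / 2 := by positivity
    obtain ⟨k, hk⟩ := exists_nat_gt ((b / 2)⁻¹ : NNReal)
    have hεk : ε k < b / 2 := by
      have h1 : ((b / 2)⁻¹ : NNReal) < (k : NNReal) + 1 := hk.trans (lt_add_one _)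
      have := NNReal.inv_lt_inv (x := (b / 2)⁻¹) (by positivity) h1
      rwa [inv_inv] at this
    have : ∀ᶠ x : NNReal in Filter.atTop, max 1 (a k / (b / 2) + 1) ≤ x :=
      Filter.eventually_ge_atTop _
    filter_upwards [this] with x hx
    have hx1 : (1 : NNReal) ≤ x := le_trans (le_max_left _ _) hx
    have hx0 : (0 : NNReal) < x := lt_of_lt_of_le one_pos hx1
    have hax : a k / x < b / 2 := by
      rw [div_lt_iff₀ hx0]
      calc a k < a k + b / 2 := lt_add_of_pos_right _ hb2
        _ = b / 2 * (a k / (b / 2) + 1) := by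
            rw [mul_add, mul_one, mul_comm (b / 2) (a k / (b / 2)),
              div_mul_cancel₀ _ hb2.ne', add_comm]
        _ ≤ b / 2 * x := mul_le_mul_right (le_trans (le_max_right _ _) hx) _
    have hgx : (⨅ j, a j + ε j * x) / x ≤ a k / x + ε k := by
      have h1 : (⨅ j, a j + ε j * x) ≤ a k + ε k * x := ciInf_le (OrderBot.bddBelow _) k
      calc (⨅ j, a j + ε j * x) / x ≤ (a k + ε k * x) / x := by gcongr
        _ = a k / x + ε k := by
            rw [add_div, mul_div_assoc, div_self hx0.ne', mul_one]
    calc (⨅ j, a j + ε j * x) / x ≤ a k / x + ε k := hgx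
      _ < b / 2 + b / 2 := add_lt_add hax hεk
      _ = b := add_halves b
end

section
/- Higman–Neumann–Neumann embedding theorem: Every countable group B embeds as a subgroup of a group W generated by two elements. -/
/-!
Let `G = B * ⟨a⟩ * ⟨b⟩`. A ping-pong argument on reduced words shows that both families
`a⁻ⁿ b aⁿ` and `e n * b⁻ⁿ a bⁿ` (`n : ℕ`) freely generate subgroups of `G`, for any
`e : ℕ → B`. Take the HNN extension of `G` in which a stable letter `t` conjugates the first
family to the second. It contains `B`. If `e` enumerates `B` with `e 0 = 1`, then `t b t⁻¹ = a`,
and `t a⁻ⁿ b aⁿ t⁻¹ b⁻ⁿ a⁻¹ bⁿ = e n`, so `a` and `t` generate the whole extension.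
-/

universe u

open Monoid CoprodI Multiplicative Pointwise Function

theorem FreeGroup.injective_lift_mul_mul_of_ping_pong {ι G : Type u} {α : Type*} [Nontrivial ι]
    [Group G] [MulAction G α] (p q : ι → G) (c : G) (P N : Set α) (hP : P.Nonempty)
    (hc : c • Nᶜ ⊆ P) (hc_inv : c⁻¹ • Pᶜ ⊆ N)
    (hPP : Pairwise (Disjoint on fun i => p i • P))
    (hNN : Pairwise (Disjoint on fun i => (q i)⁻¹ • N))
    (hPN : ∀ i j, Disjoint (p i • P) ((q j)⁻¹ • N)) :
    Injective (FreeGroup.lift fun i => p i * c * q i) := by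
  refine FreeGroup.injective_lift_of_ping_pong (fun i => p i * c * q i) (fun i => p i • P)
    (fun i => (q i)⁻¹ • N) (fun i => hP.smul_set) hPP hNN hPN (fun i => ?_) (fun i => ?_)
  · calc (p i * c * q i) • ((q i)⁻¹ • N)ᶜ = p i • c • Nᶜ := by
          simp only [Set.smul_set_compl, smul_smul, mul_inv_cancel_right]
      _ ⊆ p i • P := Set.smul_set_mono hc
  · calc (p i * c * q i)⁻¹ • (p i • P)ᶜ = (q i)⁻¹ • c⁻¹ • Pᶜ := by
          simp only [Set.smul_set_compl, smul_smul]; group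
      _ ⊆ (q i)⁻¹ • N := Set.smul_set_mono hc_inv

theorem Monoid.CoprodI.Word.fstIdx_of_smul {ι : Type*} {M : ι → Type*} [∀ i, Monoid (M i)]
    [DecidableEq ι] [∀ i, DecidableEq (M i)] {i : ι} {m : M i} (hm : m ≠ 1) {w : Word M}
    (hw : w.fstIdx ≠ some i) : (of m • w).fstIdx = some i := by
  rw [← Word.cons_eq_smul (h1 := hw) (h2 := hm), Word.fstIdx_cons m w hw hm]

theorem MonoidHom.ofInjective_symm_trans_ofInjective_apply {H G : Type*} [Group H] [Group G]
    {f g : H →* G} (hf : Injective f) (hg : Injective g) (x : H) :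
    (((ofInjective hf).symm.trans (ofInjective hg) ⟨f x, x, rfl⟩ : g.range) : G) = g x := by
  have : ofInjective hf x = ⟨f x, x, rfl⟩ := Subtype.ext (ofInjective_apply hf)
  rw [MulEquiv.trans_apply, ← this, MulEquiv.symm_apply_apply, ofInjective_apply]

theorem HNNExtension.eq_top_of_of_mem_of_t_mem {G : Type*} [Group G] {A B : Subgroup G}
    {φ : A ≃* B} {S : Subgroup (HNNExtension G A B φ)} (hof : ∀ g, of g ∈ S) (ht : t ∈ S) :
    S = ⊤ :=
  (Subgroup.eq_top_iff' S).2 fun x =>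
    x.induction_on hof ht (fun _ _ => mul_mem) (fun _ => inv_mem)

theorem exists_surjective_nat_apply_zero_eq_one (B : Type*) [One B] [Countable B] :
    ∃ e : ℕ → B, e 0 = 1 ∧ Surjective e := by
  obtain ⟨e, he⟩ := exists_surjective_nat B
  exact ⟨fun n => Nat.casesOn n 1 e, rfl, fun b => let ⟨n, hn⟩ := he b; ⟨n + 1, hn⟩⟩

namespace HigmanNeumannNeumann

/-- The free factors of `B * ⟨a⟩ * ⟨b⟩`: `B` at `none`, and infinite cyclic groups
generated by `a = gen B true` and `b = gen B false`. -/
abbrev Factor (B : Type) : Option Bool → Type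
  | none => B
  | some _ => Multiplicative ℤ

variable {B : Type} [Group B]

instance : ∀ i, Group (Factor B i)
  | none => inferInstanceAs (Group B)
  | some _ => inferInstanceAs (Group (Multiplicative ℤ))

noncomputable instance (i : Option Bool) : DecidableEq (Factor B i) := Classical.decEq _

variable (B) in
abbrev FreeProd : Type := CoprodI (Factor B)

abbrev ofB : B →* FreeProd B := CoprodI.of (M := Factor B) (i := none)

variable (B) in
def gen (u : Bool) : FreeProd B := CoprodI.of (M := Factor B) (i := some u) (ofAdd 1)

theorem gen_zpow (u : Bool) (k : ℤ) :
    gen B u ^ k = CoprodI.of (M := Factor B) (i := some u) (ofAdd k) := by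
  rw [gen, ← map_zpow, ← ofAdd_zsmul, smul_eq_mul, mul_one]

theorem fstIdx_gen_zpow_smul {u : Bool} {k : ℤ} (hk : k ≠ 0) {w : Word (Factor B)}
    (hw : w.fstIdx ≠ some (some u)) : (gen B u ^ k • w).fstIdx = some (some u) := by
  rw [gen_zpow]
  exact Word.fstIdx_of_smul (fun h => hk (ofAdd_eq_one.1 h)) hw

theorem fstIdx_zpow_mul_ofB_mul_zpow_smul_ne {u : Bool} {i j : ℤ} {g : B}
    (h : ¬(g = 1 ∧ i + j = 0)) {w : Word (Factor B)} (hw : w.fstIdx = some (some !u)) :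
    ((gen B u ^ i * ofB g * gen B u ^ j) • w).fstIdx ≠ some (some !u) := by
  have hu : (some (some u) : Option (Option Bool)) ≠ some (some !u) := by simp
  by_cases hg : g = 1
  · have hij : i + j ≠ 0 := fun hij => h ⟨hg, hij⟩
    rw [hg, map_one, mul_one, ← zpow_add, fstIdx_gen_zpow_smul hij (by rw [hw]; simp)]
    exact hu
  have hj : (gen B u ^ j • w).fstIdx ≠ some none := by
    rcases eq_or_ne j 0 with rfl | hj
    · simp [hw]
    · simp [fstIdx_gen_zpow_smul hj (hw ▸ hu.symm)]
  have hgj : (ofB g • gen B u ^ j • w).fstIdx = some none := Word.fstIdx_of_smul hg hj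
  rw [mul_smul, mul_smul]
  rcases eq_or_ne i 0 with rfl | hi
  · simp [hgj]
  · rw [fstIdx_gen_zpow_smul hi (by simp [hgj])]
    exact hu

theorem disjoint_zpow_mul_ofB_mul_zpow_smul {u : Bool} {i j : ℤ} {g : B}
    (h : ¬(g = 1 ∧ i + j = 0)) {S T : Set (Word (Factor B))}
    (hS : ∀ w ∈ S, w.fstIdx = some (some !u)) (hT : ∀ w ∈ T, w.fstIdx = some (some !u)) :
    Disjoint S ((gen B u ^ i * ofB g * gen B u ^ j) • T) := by
  rw [Set.disjoint_left]
  rintro _ hwS ⟨w, hwT, rfl⟩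
  exact fstIdx_zpow_mul_ofB_mul_zpow_smul_ne h (hT w hwT) (hS _ hwS)

/-- Zero on words that do not start with a letter from the factor `some v`. -/
noncomputable def leadExp (v : Bool) (w : Word (Factor B)) : ℤ :=
  toAdd (Word.equivPair (some v) w).head

theorem leadExp_gen_zpow_smul (v : Bool) (k : ℤ) (w : Word (Factor B)) :
    leadExp v (gen B v ^ k • w) = k + leadExp v w := by
  rw [leadExp, leadExp, gen_zpow, Word.equivPair_smul_same]
  rfl

theorem fstIdx_of_leadExp_ne_zero {v : Bool} {w : Word (Factor B)} (hw : leadExp v w ≠ 0) :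
    w.fstIdx = some (some v) := by
  by_contra h
  rw [leadExp, Word.equivPair_eq_of_fstIdx_ne h] at hw
  exact hw rfl

def posWords (v : Bool) : Set (Word (Factor B)) := {w | 0 < leadExp v w}

def negWords (v : Bool) : Set (Word (Factor B)) := {w | leadExp v w < 0}

theorem gen_smul_compl_negWords_subset (v : Bool) :
    gen B v • (negWords (B := B) v)ᶜ ⊆ posWords v := by
  rintro _ ⟨w, hw, rfl⟩
  have := leadExp_gen_zpow_smul v 1 w
  rw [zpow_one] at this
  simp only [posWords, negWords, Set.mem_compl_iff, Set.mem_ofPred_eq, not_lt] at hw ⊢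
  omega

theorem gen_inv_smul_compl_posWords_subset (v : Bool) :
    (gen B v)⁻¹ • (posWords (B := B) v)ᶜ ⊆ negWords v := by
  rintro _ ⟨w, hw, rfl⟩
  have := leadExp_gen_zpow_smul v (-1) w
  rw [zpow_neg_one] at this
  simp only [posWords, negWords, Set.mem_compl_iff, Set.mem_ofPred_eq, not_lt] at hw ⊢
  omega

theorem fstIdx_of_mem_posWords {v : Bool} {w : Word (Factor B)} (hw : w ∈ posWords v) :
    w.fstIdx = some (some v) :=
  fstIdx_of_leadExp_ne_zero (ne_of_gt hw)

theorem fstIdx_of_mem_negWords {v : Bool} {w : Word (Factor B)} (hw : w ∈ negWords v) :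
    w.fstIdx = some (some v) :=
  fstIdx_of_leadExp_ne_zero (ne_of_lt hw)

theorem posWords_nonempty (v : Bool) : (posWords (B := B) v).Nonempty :=
  ⟨_, gen_smul_compl_negWords_subset v
    ⟨Word.empty, fun h => by simpa [Word.fstIdx] using fstIdx_of_mem_negWords h, rfl⟩⟩

theorem disjoint_posWords_negWords (v : Bool) : Disjoint (posWords (B := B) v) (negWords v) :=
  Set.disjoint_left.2 fun _ hp hn => lt_asymm (α := ℤ) hp hn

/-- For `u = true` this is `g n * a⁻ⁿ * b * aⁿ`, for `u = false` it is `g n * b⁻ⁿ * a * bⁿ`. -/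
def conjFamily (u : Bool) (g : ℕ → B) (n : ℕ) : FreeProd B :=
  ofB (g n) * gen B u ^ (-(n : ℤ)) * gen B (!u) * gen B u ^ (n : ℤ)

/-- Ping-pong on words, with the sets `g n * a⁻ⁿ • P` and `a⁻ⁿ • N`, where `P` and `N` are the
words starting with a positive, respectively negative, power of `b` (for `u = true`). -/
theorem injective_lift_conjFamily (u : Bool) (g : ℕ → B) :
    Injective (FreeGroup.lift (conjFamily u g)) := by
  have hP : ∀ w ∈ posWords (B := B) (!u), w.fstIdx = some (some !u) :=
    fun _ => fstIdx_of_mem_posWords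
  have hN : ∀ w ∈ negWords (B := B) (!u), w.fstIdx = some (some !u) :=
    fun _ => fstIdx_of_mem_negWords
  refine FreeGroup.injective_lift_mul_mul_of_ping_pong
    (fun n => ofB (g n) * gen B u ^ (-(n : ℤ))) (fun n => gen B u ^ (n : ℤ)) (gen B !u)
    (posWords !u) (negWords !u) (posWords_nonempty _) (gen_smul_compl_negWords_subset _)
    (gen_inv_smul_compl_posWords_subset _) (fun m n hmn => ?_) (fun m n hmn => ?_) (fun m n => ?_)
  · have : (ofB (g m) * gen B u ^ (-(m : ℤ)))⁻¹ * (ofB (g n) * gen B u ^ (-(n : ℤ))) =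
        gen B u ^ (m : ℤ) * ofB ((g m)⁻¹ * g n) * gen B u ^ (-(n : ℤ)) := by
      rw [map_mul, map_inv]; group
    simp only [onFun, Set.disjoint_smul_set_left, smul_smul, this]
    exact disjoint_zpow_mul_ofB_mul_zpow_smul (fun ⟨_, h⟩ => hmn (by omega)) hP hP
  · have : (gen B u ^ (m : ℤ))⁻¹⁻¹ * (gen B u ^ (n : ℤ))⁻¹ =
        gen B u ^ (m : ℤ) * ofB 1 * gen B u ^ (-(n : ℤ)) := by
      rw [map_one]; group
    simp only [onFun, Set.disjoint_smul_set_left, smul_smul, this]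
    exact disjoint_zpow_mul_ofB_mul_zpow_smul (fun ⟨_, h⟩ => hmn (by omega)) hN hN
  · have : (ofB (g m) * gen B u ^ (-(m : ℤ)))⁻¹ * (gen B u ^ (n : ℤ))⁻¹ =
        gen B u ^ (m : ℤ) * ofB (g m)⁻¹ * gen B u ^ (-(n : ℤ)) := by
      rw [map_inv]; group
    simp only [Set.disjoint_smul_set_left, smul_smul, this]
    by_cases h : (g m)⁻¹ = 1 ∧ (m : ℤ) + -(n : ℤ) = 0
    · rw [h.1, map_one, mul_one, ← zpow_add, h.2, zpow_zero, one_smul]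
      exact disjoint_posWords_negWords _
    · exact disjoint_zpow_mul_ofB_mul_zpow_smul h hP hN

theorem eq_top_of_ofB_mem_of_gen_mem {K : Subgroup (FreeProd B)} (hB : ∀ b, ofB b ∈ K)
    (hgen : ∀ u, gen B u ∈ K) : K = ⊤ := by
  refine (Subgroup.eq_top_iff' K).2 fun x => ?_
  induction x using CoprodI.induction_on with
  | one => exact one_mem K
  | of i m =>
    cases i with
    | none => exact hB m
    | some u =>
      rw [← ofAdd_toAdd m, ← gen_zpow]
      exact zpow_mem (hgen u) _
  | mul x y hx hy => exact mul_mem hx hy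

theorem conjFamily_zero (u : Bool) (g : ℕ → B) : conjFamily u g 0 = ofB (g 0) * gen B !u := by
  simp [conjFamily]

theorem ofB_eq_conjFamily_mul (u : Bool) (g : ℕ → B) (n : ℕ) :
    ofB (g n) =
      conjFamily u g n * (gen B u ^ (-(n : ℤ)) * gen B (!u) * gen B u ^ (n : ℤ))⁻¹ := by
  simp only [conjFamily]; group

theorem map_mem_of_conj_conjFamily {W : Type*} [Group W] {S : Subgroup W} (F : FreeProd B →* W)
    {t : W} (ht : t ∈ S) (ha : F (gen B true) ∈ S) {e : ℕ → B} (he0 : e 0 = 1) (he : Surjective e)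
    (hconj : ∀ n, F (conjFamily false e n) = t * F (conjFamily true 1 n) * t⁻¹) (x : FreeProd B) :
    F x ∈ S := by
  have hb : F (gen B false) ∈ S := by
    have h0 := hconj 0
    simp only [conjFamily_zero, he0, Pi.one_apply, map_one, one_mul, Bool.not_true,
      Bool.not_false] at h0
    rw [show F (gen B false) = t⁻¹ * F (gen B true) * t by rw [h0]; group]
    exact mul_mem (mul_mem (inv_mem ht) ha) ht
  have hgen : ∀ u, F (gen B u) ∈ S := fun u => by cases u <;> assumption
  have hword : ∀ (u : Bool) (k l : ℤ),
      F (gen B u ^ k * gen B (!u) * gen B u ^ l) ∈ S := fun u k l => by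
    simp only [map_mul, map_zpow]
    exact mul_mem (mul_mem (zpow_mem (hgen u) k) (hgen _)) (zpow_mem (hgen u) l)
  have hB : ∀ b, F (ofB b) ∈ S := fun b => by
    obtain ⟨n, rfl⟩ := he b
    rw [ofB_eq_conjFamily_mul false e n, map_mul, map_inv, hconj n, conjFamily,
      Pi.one_apply, map_one, one_mul]
    exact mul_mem (mul_mem (mul_mem ht (hword _ _ _)) (inv_mem ht)) (inv_mem (hword _ _ _))
  exact (Subgroup.eq_top_iff' _).1 (eq_top_of_ofB_mem_of_gen_mem (K := S.comap F) hB hgen) x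

open MonoidHom in
theorem exists_embedding_two_generated (B : Type) [Group B] [Countable B] :
    ∃ (W : Type) (_ : Group W) (x y : W),
      Subgroup.closure {x, y} = (⊤ : Subgroup W) ∧ ∃ φ : B →* W, Injective φ := by
  obtain ⟨e, he0, he⟩ := exists_surjective_nat_apply_zero_eq_one B
  have hU := injective_lift_conjFamily (B := B) true 1
  have hV := injective_lift_conjFamily false e
  let W := HNNExtension (FreeProd B) _ _ ((ofInjective hU).symm.trans (ofInjective hV))
  let F : FreeProd B →* W := HNNExtension.of
  let t : W := HNNExtension.t
  have hconj : ∀ n, F (conjFamily false e n) = t * F (conjFamily true 1 n) * t⁻¹ := fun n => by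
    have := HNNExtension.equiv_eq_conj (φ := (ofInjective hU).symm.trans (ofInjective hV))
      ⟨_, FreeGroup.of n, rfl⟩
    rw [ofInjective_symm_trans_ofInjective_apply] at this
    simpa using this
  set S := Subgroup.closure {F (gen B true), t}
  have ht : t ∈ S := Subgroup.subset_closure (by simp)
  have ha : F (gen B true) ∈ S := Subgroup.subset_closure (by simp)
  exact ⟨W, inferInstance, F (gen B true), t,
    HNNExtension.eq_top_of_of_mem_of_t_mem (map_mem_of_conj_conjFamily F ht ha he0 he hconj) ht,
    F.comp ofB, (HNNExtension.of_injective _).comp (CoprodI.of_injective none)⟩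

end HigmanNeumannNeumann

/-- **Higman–Neumann–Neumann embedding theorem**: every countable group embeds
as a subgroup of a group generated by two elements. -/
theorem higman_neumann_neumann_embedding (B : Type*) [Group B] [Countable B] :
    ∃ (W : Type) (_ : Group W) (x y : W),
      Subgroup.closure {x, y} = (⊤ : Subgroup W) ∧
      ∃ φ : B →* W, Function.Injective φ := by
  have : Countable (Shrink.{0} B) := Countable.of_equiv B (equivShrink.{0} B)
  obtain ⟨W, _, x, y, hxy, φ, hφ⟩ :=
    HigmanNeumannNeumann.exists_embedding_two_generated (Shrink.{0} B)
  exact ⟨W, _, x, y, hxy, φ.comp (Shrink.mulEquiv.{0} (α := B)).symm.toMonoidHom,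
    hφ.comp (Shrink.mulEquiv.{0} (α := B)).symm.injective⟩
end

section
/- Embedding into a commutator subgroup: Every countable group B admits a countable group G and an injective group homomorphism B → G whose image is contained in the commutator subgroup [G, G] of G. -/
/-!
In the unrestricted wreath product `B Wr ℤ`, commuting a sequence `f : ℤ → B` with the shift
generator yields its discrete derivative `n ↦ f n * (f (n - 1))⁻¹`. The derivative of the
sequence equal to `b` on `n ≥ 0` and to `1` elsewhere is `b` placed at `0`, so every element of
the copy of `B` at coordinate `0` is a single commutator. The subgroup generated by these
countably many commutator witnesses is countable, and `B` lies in its commutator subgroup.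
-/

open scoped commutatorElement

theorem Subgroup.countable_closure {G : Type*} [Group G] {s : Set G} (hs : s.Countable) :
    Countable (closure s) := by
  have := hs.to_subtype
  rw [FreeGroup.closure_eq_range]
  exact (FreeGroup.lift ((↑) : s → G)).rangeRestrict_surjective.countable

theorem MonoidHom.range_comp_le_commutator {B G H : Type*} [Group B] [Group G] [Group H]
    (f : G →* H) {ψ : B →* G} (hψ : ψ.range ≤ commutator G) :
    (f.comp ψ).range ≤ commutator H := by
  rw [MonoidHom.range_comp, commutator_def] at *
  calc ψ.range.map f ≤ (⁅⊤, ⊤⁆ : Subgroup G).map f := Subgroup.map_mono hψ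
    _ = ⁅(⊤ : Subgroup G).map f, (⊤ : Subgroup G).map f⁆ := Subgroup.map_commutator _ _ _
    _ ≤ ⁅⊤, ⊤⁆ := Subgroup.commutator_mono le_top le_top

theorem exists_countable_subgroup_embedding_into_commutator {B G : Type*} [Group B] [Countable B]
    [Group G] (φ : B →* G) (hφ : Function.Injective φ) (x y : B → G)
    (hxy : ∀ b, φ b = ⁅x b, y b⁆) :
    ∃ H : Subgroup G, Countable H ∧
      ∃ ψ : B →* H, Function.Injective ψ ∧ ψ.range ≤ commutator H := by
  set H := Subgroup.closure (Set.range x ∪ Set.range y)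
  have hx b : x b ∈ H := Subgroup.subset_closure (.inl ⟨b, rfl⟩)
  have hy b : y b ∈ H := Subgroup.subset_closure (.inr ⟨b, rfl⟩)
  have hφH b : φ b ∈ H := by
    rw [hxy, commutatorElement_def]
    exact H.mul_mem (H.mul_mem (H.mul_mem (hx b) (hy b)) (H.inv_mem (hx b))) (H.inv_mem (hy b))
  refine ⟨H, Subgroup.countable_closure ((Set.countable_range x).union (Set.countable_range y)),
    φ.codRestrict H hφH, fun a b hab => hφ (congrArg Subtype.val hab), ?_⟩
  rintro _ ⟨b, rfl⟩
  have : φ.codRestrict H hφH b = ⁅(⟨x b, hx b⟩ : H), ⟨y b, hy b⟩⁆ := Subtype.ext (hxy b)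
  exact this ▸ Subgroup.commutator_mem_commutator (Subgroup.mem_top _) (Subgroup.mem_top _)

theorem exists_countable_embedding_into_commutator {B G : Type*} [Group B] [Countable B]
    [Group G] (φ : B →* G) (hφ : Function.Injective φ) (x y : B → G)
    (hxy : ∀ b, φ b = ⁅x b, y b⁆) :
    ∃ (K : Type) (_ : Group K), Countable K ∧
      ∃ ψ : B →* K, Function.Injective ψ ∧ ψ.range ≤ commutator K := by
  obtain ⟨H, _, ψ, hψ, hψH⟩ := exists_countable_subgroup_embedding_into_commutator φ hφ x y hxy
  let e : Shrink.{0} H ≃* H := Shrink.mulEquiv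
  exact ⟨Shrink.{0} H, inferInstance, e.toEquiv.countable_iff.mpr inferInstance,
    e.symm.toMonoidHom.comp ψ, e.symm.injective.comp hψ,
    e.symm.toMonoidHom.range_comp_le_commutator hψH⟩

section

open SemidirectProduct

variable (B : Type*) [Group B]

/-- `shiftMulAut B f n = f (n - 1)`. -/
def shiftMulAut : MulAut (ℤ → B) := MulEquiv.arrowCongr (Equiv.addRight 1) (MulEquiv.refl B)

/-- The unrestricted wreath product `B Wr ℤ`. -/
abbrev WreathInt := (ℤ → B) ⋊[zpowersHom (MulAut (ℤ → B)) (shiftMulAut B)] Multiplicative ℤ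

namespace WreathInt

variable {B}

theorem commutatorElement_inl_inr (f : ℤ → B) :
    ⁅(inl f : WreathInt B), (inr (Multiplicative.ofAdd 1) : WreathInt B)⁆ =
      inl fun n => f n * (f (n - 1))⁻¹ := by
  rw [commutatorElement_def, mul_assoc (inl f), mul_assoc (inl f), ← map_inv inl, ← map_inv inr,
    ← inl_aut, ← map_mul, zpowersHom_apply, toAdd_ofAdd, zpow_one]
  rfl

def single : B →* WreathInt B := inl.comp (MonoidHom.mulSingle (fun _ : ℤ => B) 0)

theorem single_injective : Function.Injective (single (B := B)) :=
  inl_injective.comp (Pi.mulSingle_injective (M := fun _ : ℤ => B) 0)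

theorem single_eq_commutatorElement (b : B) :
    single b = ⁅(inl ((Set.Ici 0).mulIndicator fun _ => b) : WreathInt B),
      (inr (Multiplicative.ofAdd 1) : WreathInt B)⁆ := by
  rw [commutatorElement_inl_inr, single, MonoidHom.comp_apply]
  congr 1
  funext n
  simp only [MonoidHom.mulSingle_apply, Set.mulIndicator_apply, Set.mem_Ici, Pi.mulSingle_apply]
  split_ifs <;> first | omega | simp

end WreathInt

end

/-- **Embedding into a commutator subgroup**: every countable group `B` admits a countable
group `G` and an injective homomorphism `B → G` with image inside `[G, G]`. -/
theorem countable_embeds_in_commutator (B : Type*) [Group B] [Countable B] :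
    ∃ (G : Type) (_ : Group G), Countable G ∧
      ∃ φ : B →* G, Function.Injective φ ∧ φ.range ≤ commutator G :=
  exists_countable_embedding_into_commutator WreathInt.single WreathInt.single_injective _ _
    WreathInt.single_eq_commutatorElement
end

section
/- Two-generated embedding of commutator subgroups: For every countable group G there exists a group W generated by two elements and an injective group homomorphism from the commutator subgroup [G, G] of G into W whose image is contained in the commutator subgroup [W, W] of W. -/
/-!
Higman–Neumann–Neumann: a countable group `H`, enumerated as `g 0 = 1, g 1, g 2, …`, embeds in
the HNN extension `W` of `H ∗ F(a, b)` whose stable letter `t` conjugates `bᵏ a b⁻ᵏ` to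
`g k · aᵏ b a⁻ᵏ` for every `k` (`F(a, b)` is `FreeGroup Bool`, `a = true`, `b = false`).
Both families freely generate free subgroups, so `W` is defined and contains `H`: in `F(ℤ) ⋊ ℤ`, with `ℤ` shifting the basis, `a ↦ x₀` and `b ↦ 1` send `bᵏ a b⁻ᵏ` to
the basis element `xₖ`, and the second family is free already after projecting onto `F(a, b)`.
The relation for `k = 0` gives `b = t a t⁻¹`, and then each `g k` is a word in `a` and `t`, so
`W = ⟨a, t⟩`. Finally an embedding maps `[G, G]` into `[W, W]`.
-/

open Function Subgroup
open scoped Monoid.Coprod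

namespace FreeGroup

def shiftAut : Multiplicative ℤ →* MulAut (FreeGroup ℤ) where
  toFun n := freeGroupCongr (Equiv.addRight n.toAdd)
  map_one' := by ext x; simp
  map_mul' m n := by
    ext x
    simp only [MulAut.mul_apply, freeGroupCongr_apply, Equiv.coe_addRight, map.comp, toAdd_mul]
    congr 2
    funext y
    simp only [comp_apply]
    ring

theorem shiftAut_apply_of (n : Multiplicative ℤ) (m : ℤ) :
    shiftAut n (of m) = of (m + n.toAdd) := rfl

variable {α : Type*} [DecidableEq α]

def toShift (c : α) : FreeGroup α →* FreeGroup ℤ ⋊[shiftAut] Multiplicative ℤ :=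
  lift fun x => if x = c then .inl (of 0) else .inr (.ofAdd 1)

def conjPowLift (c d : α) : FreeGroup ℕ →* FreeGroup α :=
  lift fun k => of d ^ k * of c * (of d ^ k)⁻¹

theorem toShift_conjPowLift_of {c d : α} (hcd : c ≠ d) (k : ℕ) :
    toShift c (conjPowLift c d (of k)) = .inl (of k) := by
  have hc : toShift c (of c) = .inl (of 0) := by simp [toShift]
  have hd : toShift c (of d) = .inr (.ofAdd 1) := by simp [toShift, hcd.symm]
  rw [conjPowLift, lift_apply_of, _root_.map_mul, _root_.map_mul, _root_.map_inv, _root_.map_pow,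
    hc, hd, ← _root_.map_pow, ← ofAdd_nsmul, ← _root_.map_inv, ← SemidirectProduct.inl_aut,
    shiftAut_apply_of]
  simp

theorem conjPowLift_injective {c d : α} (hcd : c ≠ d) : Injective (conjPowLift c d) := by
  have key : (toShift c).comp (conjPowLift c d) = SemidirectProduct.inl.comp (map Nat.cast) :=
    ext_hom _ _ fun k => by simp [toShift_conjPowLift_of hcd]
  refine Injective.of_comp (f := toShift c) ?_
  rw [← MonoidHom.coe_comp, key]
  exact SemidirectProduct.inl_injective.comp (map_injective Nat.cast_injective)

end FreeGroup

namespace HNNExtension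

variable {G : Type*} [Group G] {A B : Subgroup G} {φ : A ≃* B}

theorem eq_top_of_t_mem_of_forall_of_mem {S : Subgroup (HNNExtension G A B φ)} (ht : t ∈ S)
    (hof : ∀ g, of g ∈ S) : S = ⊤ := by
  refine (eq_top_iff' S).2 fun x => ?_
  induction x using induction_on with
  | of g => exact hof g
  | t => exact ht
  | mul x y hx hy => exact mul_mem hx hy
  | inv x hx => exact inv_mem hx

end HNNExtension

noncomputable def MonoidHom.rangeEquivRange {F K : Type*} [Group F] [Group K] {e₁ e₂ : F →* K}
    (h₁ : Injective e₁) (h₂ : Injective e₂) : e₁.range ≃* e₂.range :=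
  (MonoidHom.ofInjective h₁).symm.trans (MonoidHom.ofInjective h₂)

theorem HNNExtension.of_apply_eq_conj {F K : Type*} [Group F] [Group K] {e₁ e₂ : F →* K}
    (h₁ : Injective e₁) (h₂ : Injective e₂) (w : F) :
    (of (e₂ w) : HNNExtension K e₁.range e₂.range (MonoidHom.rangeEquivRange h₁ h₂)) =
      t * of (e₁ w) * t⁻¹ := by
  have := equiv_eq_conj (φ := MonoidHom.rangeEquivRange h₁ h₂) (MonoidHom.ofInjective h₁ w)
  simpa [MonoidHom.rangeEquivRange, MonoidHom.ofInjective_apply] using this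

namespace HigmanNeumannNeumann

open FreeGroup (conjPowLift conjPowLift_injective)
open Monoid.Coprod (inl inr)

variable {H : Type*} [Group H] (g : ℕ → H)

def embA : FreeGroup ℕ →* H ∗ FreeGroup Bool :=
  inr.comp (conjPowLift true false)

def embB : FreeGroup ℕ →* H ∗ FreeGroup Bool :=
  FreeGroup.lift fun k => inl (g k) * inr (conjPowLift false true (FreeGroup.of k))

theorem embA_injective : Injective (embA (H := H)) :=
  Monoid.Coprod.inr_injective.comp (conjPowLift_injective (by decide))

theorem snd_comp_embB : Monoid.Coprod.snd.comp (embB g) = conjPowLift false true :=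
  FreeGroup.ext_hom _ _ fun k => by simp [embB]

theorem embB_injective : Injective (embB g) := by
  refine Injective.of_comp (f := Monoid.Coprod.snd) ?_
  rw [← MonoidHom.coe_comp, snd_comp_embB]
  exact conjPowLift_injective (by decide)

abbrev W : Type _ :=
  HNNExtension (H ∗ FreeGroup Bool) (embA (H := H)).range (embB g).range
    (MonoidHom.rangeEquivRange embA_injective (embB_injective g))

theorem of_inl_mul_inr_eq_conj (k : ℕ) :
    (HNNExtension.of (inl (g k) * inr (conjPowLift false true (FreeGroup.of k))) : W g) =
      HNNExtension.t * HNNExtension.of (inr (conjPowLift true false (FreeGroup.of k))) *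
        HNNExtension.t⁻¹ :=
  HNNExtension.of_apply_eq_conj embA_injective (embB_injective g) (FreeGroup.of k)

theorem closure_eq_top (hg : Surjective g) (hg₀ : g 0 = 1) :
    closure {(HNNExtension.of (inr (FreeGroup.of true)) : W g), HNNExtension.t} = ⊤ := by
  set S := closure {(HNNExtension.of (inr (FreeGroup.of true)) : W g), HNNExtension.t}
  have ha : HNNExtension.of (inr (FreeGroup.of true)) ∈ S := Subgroup.subset_closure (by simp)
  have ht : HNNExtension.t ∈ S := Subgroup.subset_closure (by simp)
  have hinr :
      (inr : FreeGroup Bool →* H ∗ FreeGroup Bool).range ≤ S.comap HNNExtension.of := by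
    rw [MonoidHom.range_eq_map, ← FreeGroup.closure_range_of, MonoidHom.map_closure,
      closure_le]
    rintro _ ⟨_, ⟨(_ | _), rfl⟩, rfl⟩
    · have hb := of_inl_mul_inr_eq_conj g 0
      simp only [hg₀, conjPowLift, FreeGroup.lift_apply_of, pow_zero, one_mul, inv_one, mul_one,
        map_one] at hb
      rw [SetLike.mem_coe, mem_comap, hb]
      exact mul_mem (mul_mem ht ha) (inv_mem ht)
    · exact ha
  have hinl : (inl : H →* H ∗ FreeGroup Bool).range ≤ S.comap HNNExtension.of := by
    rintro _ ⟨h, rfl⟩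
    obtain ⟨k, rfl⟩ := hg h
    have hk := of_inl_mul_inr_eq_conj g k
    rw [map_mul, ← eq_mul_inv_iff_mul_eq] at hk
    rw [mem_comap, hk]
    exact mul_mem (mul_mem (mul_mem ht (hinr ⟨_, rfl⟩)) (inv_mem ht))
      (inv_mem (hinr ⟨_, rfl⟩))
  have hK : (⊤ : Subgroup (H ∗ FreeGroup Bool)) ≤ S.comap HNNExtension.of := by
    rw [← Monoid.Coprod.range_inl_sup_range_inr]
    exact sup_le hinl hinr
  exact HNNExtension.eq_top_of_t_mem_of_forall_of_mem ht fun x => hK (mem_top x)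

theorem of_inl_injective : Injective fun h : H => (HNNExtension.of (inl h) : W g) :=
  (HNNExtension.of_injective _).comp Monoid.Coprod.inl_injective

end HigmanNeumannNeumann

theorem exists_surjective_nat_apply_zero_eq {α : Type*} [Countable α] (x : α) :
    ∃ g : ℕ → α, Surjective g ∧ g 0 = x := by
  have : Nonempty α := ⟨x⟩
  obtain ⟨f, hf⟩ := exists_surjective_nat α
  refine ⟨fun | 0 => x | n + 1 => f n, fun y => ?_, rfl⟩
  obtain ⟨n, rfl⟩ := hf y
  exact ⟨n + 1, rfl⟩

theorem exists_injective_hom_two_generated (H : Type*) [Group H] [Countable H] :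
    ∃ (W : Type) (_ : Group W) (x y : W),
      closure {x, y} = ⊤ ∧ ∃ i : H →* W, Injective i := by
  obtain ⟨g, hg, hg₀⟩ := exists_surjective_nat_apply_zero_eq (1 : H)
  let e : H ≃* Shrink.{0} H := Shrink.mulEquiv.symm
  refine ⟨HigmanNeumannNeumann.W (e ∘ g), inferInstance, _, _,
    HigmanNeumannNeumann.closure_eq_top _ (e.surjective.comp hg) (by simp [hg₀]),
    (HNNExtension.of.comp Monoid.Coprod.inl).comp e.toMonoidHom, ?_⟩
  exact (HigmanNeumannNeumann.of_inl_injective _).comp e.injective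

/-- **Two-generated embedding of commutator subgroups**: for every countable group `G`
there is a two-generated group `W` and an injective homomorphism `[G,G] → W`
whose image lies inside `[W,W]`. -/
theorem commutator_embeds_in_two_generated (G : Type*) [Group G] [Countable G] :
    ∃ (W : Type) (_ : Group W) (x y : W),
      Subgroup.closure {x, y} = (⊤ : Subgroup W) ∧
      ∃ ψ : ↥(commutator G) →* W, Function.Injective ψ ∧ ψ.range ≤ commutator W := by
  obtain ⟨W, _, x, y, hxy, i, hi⟩ := exists_injective_hom_two_generated G
  refine ⟨W, _, x, y, hxy, i.comp (commutator G).subtype, hi.comp Subtype.val_injective, ?_⟩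
  rw [MonoidHom.range_comp, range_subtype, map_commutator_eq]
  exact commutator_mono le_top le_top
end
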